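/- Let X be a connected, locally finite simple graph and Y a simple graph, and let a group G act on X and on Y by graph automorphisms, via homomorphisms ρ_X : G → Aut(X) and ρ_Y : G → Aut(Y). Assume that the diagonal action of G on the set V(X) × V(Y) of pairs of vertices is faithful, has only finitely many orbits, and has finite point stabilizers. If the image ρ_Y(G) acts on the vertices of Y with finite stabilizers, then the subgroup ker(ρ_X) · ker(ρ_Y) has finite index in G; consequently, G has a finite-index subgroup isomorphic to ker(ρ_X) × ker(ρ_Y), where the factor ker(ρ_Y) acts trivially on Y and the factor ker(ρ_X) acts trivially on X. -/

import Mathlib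

/-!
The image `N` of `ker ρY` in `Aut X` acts on `X` with finitely many orbits (because `ρY` maps the
stabilizer of a vertex `w₀` of `Y` onto a finite group) and with finite vertex stabilizers. Such a
group has finite index in its normalizer, which contains `ρX G`. Indeed, if the `N`-orbit of `v₀`
is `R`-dense, the finitely many elements of `N` moving `v₀` by at most `2R + 1` generate a subgroup
`M` whose orbit of `v₀` is still `R`-dense. An automorphism fixing `v₀` and centralizing `M` is then
determined by its restriction to the `R`-ball around `v₀`, so there are finitely many of them. The
stabilizer of `v₀` in the normalizer permutes the generators of `M` by conjugation, so it is finite,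
and finite index follows from the finiteness of the orbits. Finally `ker ρX ⊔ ker ρY` is the
preimage of `N`, and the two kernels are normal and intersect trivially, so their join is their
direct product.
-/

open Subgroup SimpleGraph

theorem Subgroup.finite_setOf_smul_eq {Γ α : Type*} [Group Γ] [MulAction Γ α] {H : Subgroup Γ}
    {a : α} (hstab : {g | g ∈ H ∧ g • a = a}.Finite) (b : α) :
    {g | g ∈ H ∧ g • a = b}.Finite := by
  rcases Set.eq_empty_or_nonempty {g | g ∈ H ∧ g • a = b} with hempty | ⟨g₀, hg₀H, hg₀⟩
  · exact hempty ▸ Set.finite_empty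
  refine (hstab.image (g₀ * ·)).subset fun g ⟨hgH, hg⟩ =>
    ⟨g₀⁻¹ * g, ⟨?_, ?_⟩, mul_inv_cancel_left g₀ g⟩
  · exact mul_mem (inv_mem hg₀H) hgH
  · rw [mul_smul, hg, ← hg₀, inv_smul_smul]

theorem Subgroup.relIndex_ne_zero_of_finite_cover {G : Type*} [Group G] {H K : Subgroup G}
    {t : Set G} (ht : t.Finite) (htK : t ⊆ K) (hcover : ∀ g ∈ K, ∃ a ∈ t, a⁻¹ * g ∈ H) :
    H.relIndex K ≠ 0 := by
  have : Finite (K ⧸ H.subgroupOf K) := by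
    refine Set.finite_univ_iff.mp ((ht.preimage Subtype.val_injective.injOn).image
      QuotientGroup.mk |>.subset fun q _ => ?_)
    obtain ⟨g, rfl⟩ := QuotientGroup.mk_surjective q
    obtain ⟨a, hat, ha⟩ := hcover g g.2
    exact ⟨⟨a, htK hat⟩, hat, QuotientGroup.eq.mpr ha⟩
  exact index_ne_zero_of_finite

noncomputable def Subgroup.supMulEquivProdOfDisjoint {G : Type*} [Group G] {H K : Subgroup G}
    [hH : H.Normal] [hK : K.Normal] (hdisj : Disjoint H K) : ↥(H ⊔ K) ≃* H × K :=
  let f := MonoidHom.noncommCoprod H.subtype K.subtype fun m n =>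
    commute_of_normal_of_disjoint H K hH hK hdisj m n m.2 n.2
  have hinj : Function.Injective f := (MonoidHom.noncommCoprod_injective _ _ _).mpr
    ⟨H.subtype_injective, K.subtype_injective, by rwa [range_subtype, range_subtype]⟩
  have hrange : f.range = H ⊔ K := (MonoidHom.noncommCoprod_range _ _ _).trans
    (by rw [range_subtype, range_subtype])
  (MulEquiv.subgroupCongr hrange.symm).trans (MonoidHom.ofInjective hinj).symm

namespace SimpleGraph

variable {V W : Type*} {X : SimpleGraph V} {Y : SimpleGraph W}

theorem Hom.edist_le (f : X →g Y) (u v : V) : Y.edist (f u) (f v) ≤ X.edist u v := by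
  by_cases h : X.Reachable u v
  · obtain ⟨p, hp⟩ := h.exists_walk_length_eq_edist
    exact hp ▸ (SimpleGraph.edist_le (p.map f)).trans_eq (by rw [Walk.length_map])
  · simp [edist_eq_top_of_not_reachable h]

theorem Iso.edist_eq (f : X ≃g Y) (u v : V) : Y.edist (f u) (f v) = X.edist u v :=
  le_antisymm (Hom.edist_le f.toHom u v) (by simpa using Hom.edist_le f.symm.toHom (f u) (f v))

theorem Iso.dist_eq (f : X ≃g Y) (u v : V) : Y.dist (f u) (f v) = X.dist u v := by
  rw [dist, dist, f.edist_eq]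

theorem finite_setOf_exists_walk_length_le (hlf : ∀ v : V, (X.neighborSet v).Finite) (c : V)
    (R : ℕ) : {u | ∃ p : X.Walk c u, p.length ≤ R}.Finite := by
  induction R generalizing c with
  | zero =>
    refine (Set.finite_singleton c).subset fun u ⟨p, hp⟩ => ?_
    exact (p.eq_of_length_eq_zero (Nat.le_zero.mp hp)).symm
  | succ R ih =>
    refine ((Set.finite_singleton c).union ((hlf c).biUnion fun x _ => ih x)).subset ?_
    rintro u ⟨_ | ⟨hadj, q⟩, hp⟩
    · exact Or.inl rfl
    · exact Or.inr (Set.mem_biUnion hadj ⟨q, by simpa using hp⟩)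

theorem Connected.finite_setOf_dist_le (hconn : X.Connected)
    (hlf : ∀ v : V, (X.neighborSet v).Finite) (c : V) (R : ℕ) :
    {u | X.dist c u ≤ R}.Finite := by
  refine (finite_setOf_exists_walk_length_le hlf c R).subset fun u hu => ?_
  obtain ⟨p, hp⟩ := hconn.exists_walk_length_eq_dist c u
  exact ⟨p, hp ▸ hu⟩

def ActsCocompactly (N : Subgroup (X ≃g X)) : Prop :=
  ∃ T : Set V, T.Finite ∧ ∀ v, ∃ n ∈ N, n v ∈ T

def HasFiniteStabilizers (N : Subgroup (X ≃g X)) : Prop :=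
  ∀ v : V, {n | n ∈ N ∧ n v = v}.Finite

section

variable {N : Subgroup (X ≃g X)}

theorem ActsCocompactly.exists_dist_le (h : ActsCocompactly N) (v₀ : V) :
    ∃ R, ∀ v, ∃ n ∈ N, X.dist (n v₀) v ≤ R := by
  obtain ⟨T, hT, hcover⟩ := h
  obtain ⟨R, hR⟩ := (hT.image (X.dist v₀)).bddAbove
  refine ⟨R, fun v => ?_⟩
  obtain ⟨n, hnN, hnv⟩ := hcover v
  refine ⟨n⁻¹, inv_mem hnN, ?_⟩
  rw [← n.dist_eq, RelIso.apply_inv_self]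
  exact hR ⟨_, hnv, rfl⟩

theorem HasFiniteStabilizers.finite_setOf_dist_le (h : HasFiniteStabilizers N)
    (hconn : X.Connected) (hlf : ∀ v : V, (X.neighborSet v).Finite) (v₀ : V) (r : ℕ) :
    {n | n ∈ N ∧ X.dist v₀ (n v₀) ≤ r}.Finite :=
  ((hconn.finite_setOf_dist_le hlf v₀ r).biUnion fun u _ => finite_setOf_smul_eq (h v₀) u).subset
    fun _ hn => Set.mem_biUnion hn.2 ⟨hn.1, rfl⟩

theorem exists_mem_closure_dist_le (hconn : X.Connected) {v₀ : V} {R : ℕ}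
    (hR : ∀ v, ∃ n ∈ N, X.dist (n v₀) v ≤ R) (v : V) :
    ∃ m ∈ closure {n | n ∈ N ∧ X.dist v₀ (n v₀) ≤ 2 * R + 1}, X.dist (m v₀) v ≤ R := by
  set M := closure {n | n ∈ N ∧ X.dist v₀ (n v₀) ≤ 2 * R + 1}
  have step (a b : V) (hab : X.Adj a b) :
      (∃ m ∈ M, X.dist (m v₀) a ≤ R) → ∃ m ∈ M, X.dist (m v₀) b ≤ R := by
    rintro ⟨m, hmM, hma⟩
    -- the orbit points `m v₀` near `a` and `n v₀` near `b` are at most `2R + 1` apart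
    obtain ⟨n, hnN, hnb⟩ := hR b
    have hmN : m ∈ N := (closure_le N).mpr (fun _ h => h.1) hmM
    have hshort : X.dist v₀ ((m⁻¹ * n) v₀) ≤ 2 * R + 1 := by
      rw [← m.dist_eq, RelIso.mul_apply, RelIso.apply_inv_self]
      have hab' : X.dist a b = 1 := dist_eq_one_iff_adj.mpr hab
      have := hconn.dist_triangle (u := m v₀) (v := a) (w := n v₀)
      have := hconn.dist_triangle (u := a) (v := b) (w := n v₀)
      rw [dist_comm (u := b)] at this
      omega
    exact ⟨n, by simpa using mul_mem hmM (subset_closure ⟨mul_mem (inv_mem hmN) hnN, hshort⟩),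
      hnb⟩
  have hwalk {a b : V} (p : X.Walk a b) :
      (∃ m ∈ M, X.dist (m v₀) a ≤ R) → ∃ m ∈ M, X.dist (m v₀) b ≤ R := by
    induction p with
    | nil => exact id
    | cons hadj _ ih => exact ih ∘ step _ _ hadj
  exact hwalk (hconn.preconnected v₀ v).some ⟨1, one_mem M, by simp⟩

theorem finite_setOf_mem_centralizer_apply_eq (hconn : X.Connected)
    (hlf : ∀ v : V, (X.neighborSet v).Finite) {M : Subgroup (X ≃g X)} {v₀ : V} {R : ℕ}
    (hM : ∀ v, ∃ m ∈ M, X.dist (m v₀) v ≤ R) :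
    {g | g ∈ centralizer (M : Set (X ≃g X)) ∧ g v₀ = v₀}.Finite := by
  set B := {u | X.dist v₀ u ≤ R}
  have hB : B.Finite := hconn.finite_setOf_dist_le hlf v₀ R
  have : Finite B := hB.to_subtype
  refine Set.Finite.of_finite_image (f := fun g (u : B) => g u) ?_ ?_
  · refine (Set.Finite.pi' fun _ => hB).subset ?_
    rintro _ ⟨g, ⟨-, hg⟩, rfl⟩ u
    change X.dist v₀ (g u) ≤ R
    rw [← hg, g.dist_eq]
    exact u.2
  · rintro g ⟨hgC, -⟩ h ⟨hhC, -⟩ hgh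
    refine RelIso.ext fun v => ?_
    obtain ⟨m, hmM, hmv⟩ := hM v
    have hu : m⁻¹ v ∈ B := by
      change X.dist v₀ (m⁻¹ v) ≤ R
      rwa [← m.dist_eq, RelIso.apply_inv_self]
    have hconj (k) (hk : k ∈ centralizer (M : Set (X ≃g X))) : k v = m (k (m⁻¹ v)) := by
      rw [← RelIso.mul_apply m k, mem_centralizer_iff.mp hk m hmM, RelIso.mul_apply,
        RelIso.apply_inv_self]
    rw [hconj g hgC, hconj h hhC]
    exact congrArg m (congrFun hgh ⟨_, hu⟩)

theorem finite_setOf_mem_normalizer_apply_eq (hconn : X.Connected)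
    (hlf : ∀ v : V, (X.neighborSet v).Finite) (hcoc : ActsCocompactly N)
    (hstab : HasFiniteStabilizers N) (v₀ : V) :
    {g | g ∈ normalizer (N : Set (X ≃g X)) ∧ g v₀ = v₀}.Finite := by
  obtain ⟨R, hR⟩ := hcoc.exists_dist_le v₀
  set F := {n | n ∈ N ∧ X.dist v₀ (n v₀) ≤ 2 * R + 1}
  have hF : F.Finite := hstab.finite_setOf_dist_le hconn hlf v₀ _
  have : Finite F := hF.to_subtype
  have hC := finite_setOf_mem_centralizer_apply_eq hconn hlf (exists_mem_closure_dist_le hconn hR)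
  rw [centralizer_closure] at hC
  -- two elements of the stabilizer that conjugate `F` alike differ by an element of `hC`
  refine Set.Finite.of_finite_fibers (fun g (n : F) => g * (n : X ≃g X) * g⁻¹) ?_ ?_
  · refine (Set.Finite.pi' fun _ => hF).subset ?_
    rintro _ ⟨g, ⟨hgN, hg⟩, rfl⟩ n
    refine ⟨(mem_normalizer_iff.mp hgN n).mp n.2.1, ?_⟩
    change X.dist v₀ (g ((n : X ≃g X) (g⁻¹ v₀))) ≤ _
    rw [← hg, RelIso.inv_apply_self, g.dist_eq]
    exact n.2.2
  · rintro _ ⟨g, ⟨-, hg⟩, rfl⟩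
    refine (hC.image (g * ·)).subset ?_
    rintro h ⟨⟨-, hh⟩, hgh⟩
    refine ⟨g⁻¹ * h, ⟨mem_centralizer_iff.mpr fun n hn => ?_, ?_⟩, mul_inv_cancel_left g h⟩
    · have hconj : h * n * h⁻¹ = g * n * g⁻¹ := congrFun hgh ⟨n, hn⟩
      calc n * (g⁻¹ * h) = g⁻¹ * (g * n * g⁻¹) * h := by group
        _ = g⁻¹ * h * n := by rw [← hconj]; group
    · calc g⁻¹ (h v₀) = g⁻¹ (g v₀) := by rw [hh, hg]
        _ = v₀ := RelIso.inv_apply_self g v₀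

theorem relIndex_normalizer_ne_zero (hconn : X.Connected)
    (hlf : ∀ v : V, (X.neighborSet v).Finite) (hcoc : ActsCocompactly N)
    (hstab : HasFiniteStabilizers N) : N.relIndex (normalizer (N : Set (X ≃g X))) ≠ 0 := by
  obtain ⟨v₀⟩ := hconn.nonempty
  have hS := finite_setOf_mem_normalizer_apply_eq hconn hlf hcoc hstab v₀
  obtain ⟨T, hT, hcover⟩ := hcoc
  have hfin : {g | g ∈ normalizer (N : Set (X ≃g X)) ∧ g v₀ ∈ T}.Finite :=
    (hT.biUnion fun t _ => finite_setOf_smul_eq hS t).subset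
      fun _ hg => Set.mem_biUnion hg.2 ⟨hg.1, rfl⟩
  refine relIndex_ne_zero_of_finite_cover hfin (fun _ hg => hg.1) fun g hg => ?_
  obtain ⟨n, hnN, hn⟩ := hcover (g v₀)
  refine ⟨n * g, ⟨mul_mem (le_normalizer hnN) hg, hn⟩, ?_⟩
  convert (mem_normalizer_iff.mp (inv_mem hg) n⁻¹).mp (inv_mem hnN) using 1
  group

end

section

variable {G : Type*} [Group G] (ρX : G →* (X ≃g X)) (ρY : G →* (Y ≃g Y))

theorem actsCocompactly_map_ker
    (horb : ∃ s : Finset (V × W), ∀ p : V × W, ∃ g : G, (ρX g p.1, ρY g p.2) ∈ s) {w₀ : W}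
    (hdisc : {f : Y ≃g Y | f ∈ ρY.range ∧ f w₀ = w₀}.Finite) :
    ActsCocompactly (ρY.ker.map ρX) := by
  obtain ⟨s, hs⟩ := horb
  set B := {g : G | ρY g w₀ ∈ Prod.snd '' (s : Set (V × W))}
  have hB : (ρY '' B).Finite := by
    refine ((s.finite_toSet.image Prod.snd).biUnion fun w _ =>
      finite_setOf_smul_eq hdisc w).subset ?_
    rintro _ ⟨g, hg, rfl⟩
    exact Set.mem_biUnion hg ⟨⟨g, rfl⟩, rfl⟩
  -- `B₀` holds one `g` for each of the finitely many values of `ρY g` on `B`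
  obtain ⟨B₀, -, hB₀, hcover⟩ :=
    Set.exists_subset_image_finite_and.mp ⟨ρY '' B, subset_rfl, hB, subset_rfl⟩
  refine ⟨Set.image2 (fun b u => ρX b⁻¹ u) B₀ (Prod.fst '' (s : Set (V × W))),
    hB₀.image2 _ (s.finite_toSet.image _), fun v => ?_⟩
  obtain ⟨g, hg⟩ := hs (v, w₀)
  obtain ⟨b, hb, hbg⟩ := hcover ⟨g, ⟨_, hg, rfl⟩, rfl⟩
  refine ⟨ρX (b⁻¹ * g), mem_map_of_mem _ ?_, b, hb, _, ⟨_, hg, rfl⟩, ?_⟩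
  · rw [MonoidHom.mem_ker, map_mul, map_inv, hbg, inv_mul_cancel]
  · rw [map_mul]
    rfl

theorem hasFiniteStabilizers_map_ker
    (hstab : ∀ (v : V) (w : W), {g : G | ρX g v = v ∧ ρY g w = w}.Finite) (w₀ : W) :
    HasFiniteStabilizers (ρY.ker.map ρX) := fun v =>
  ((hstab v w₀).image ρX).subset fun _ ⟨⟨g, hgK, hgf⟩, hv⟩ =>
    ⟨g, ⟨hgf ▸ hv, by rw [MonoidHom.mem_ker.mp hgK]; rfl⟩, hgf⟩

end

end SimpleGraph

/-- Lemma 2.3 ("discrete factor") of the paper, in its combinatorial form: let a group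
`G` act on a connected locally finite simple graph `X` and on a simple graph `Y` so
that the diagonal action on pairs of vertices is faithful, has finitely many orbits
and finite point stabilizers. If the image of `G` in `Aut(Y)` has finite vertex
stabilizers, then `ker ρX · ker ρY` has finite index in `G`; consequently `G` has a
finite-index subgroup isomorphic to `ker ρX × ker ρY`. -/
theorem product_action_virtual_splitting {G V W : Type*} [Group G]
    (X : SimpleGraph V) (Y : SimpleGraph W)
    (hconn : X.Connected) (hlf : ∀ v : V, (X.neighborSet v).Finite)
    (ρX : G →* (X ≃g X)) (ρY : G →* (Y ≃g Y))
    (hfaithful : ∀ g : G, (∀ v : V, ρX g v = v) → (∀ w : W, ρY g w = w) → g = 1)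
    (horb : ∃ s : Finset (V × W), ∀ p : V × W, ∃ g : G, (ρX g p.1, ρY g p.2) ∈ s)
    (hstab : ∀ (v : V) (w : W), {g : G | ρX g v = v ∧ ρY g w = w}.Finite)
    (hdisc : ∀ w : W, {f : Y ≃g Y | f ∈ ρY.range ∧ f w = w}.Finite) :
    (MonoidHom.ker ρX ⊔ MonoidHom.ker ρY).FiniteIndex ∧
      ∃ H : Subgroup G, H.FiniteIndex ∧
        Nonempty (H ≃* (MonoidHom.ker ρX × MonoidHom.ker ρY)) := by
  have hdisj : Disjoint ρX.ker ρY.ker := disjoint_def.mpr fun hX hY =>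
    hfaithful _ (DFunLike.congr_fun (MonoidHom.mem_ker.mp hX))
      (DFunLike.congr_fun (MonoidHom.mem_ker.mp hY))
  have hfin : (ρX.ker ⊔ ρY.ker).FiniteIndex := by
    rcases isEmpty_or_nonempty W with _ | ⟨⟨w₀⟩⟩
    · have hker : ρY.ker = ⊤ :=
        eq_top_iff.mpr fun g _ => MonoidHom.mem_ker.mpr (RelIso.ext isEmptyElim)
      rw [hker, sup_top_eq]
      infer_instance
    · have hrange : ρX.range ≤ normalizer (ρY.ker.map ρX : Set (X ≃g X)) := by
        have := le_normalizer_map (H := ρY.ker) ρX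
        rwa [normalizer_eq_top, ← MonoidHom.range_eq_map] at this
      rw [finiteIndex_iff, sup_comm, ← Subgroup.comap_map_eq, index_comap]
      exact mt (relIndex_eq_zero_of_le_right hrange) <| relIndex_normalizer_ne_zero hconn hlf
        (actsCocompactly_map_ker ρX ρY horb (hdisc w₀))
        (hasFiniteStabilizers_map_ker ρX ρY hstab w₀)
  exact ⟨hfin, _, hfin, ⟨supMulEquivProdOfDisjoint hdisj⟩⟩
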